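/- arXiv:1509.05198 — 2 statements merged into one kernel-verified Lean document; each statement's English description precedes it below -/
import Mathlib

section
/- Assume k is even and let a, a′ ∈ F both have tr(a) = tr(a′) = 1. Then the graphs G_k(a) and G_k(a′) are isomorphic as simple graphs. -/
/-- The absolute trace `tr(x) = x + x² + x⁴ + ⋯ + x^{2^{k-1}}` of a finite field
of order `2^k`, taking values in the prime subfield `{0, 1} ⊆ F`. -/
def fieldTr {F : Type*} [Field F] (k : ℕ) (x : F) : F :=
  ∑ i ∈ Finset.range k, x ^ (2 ^ i)

/-- The defining relation of the graph `G_k(a)` on the vertex set `F ∪ {∞}`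
(with `∞ = none`): distinct `x, y ∈ F` are related iff
`tr((xy + x + a)/(x + y)) = 0`, and `x ∈ F` is related to `∞` iff `tr(x) = 0`. -/
def adjRel {F : Type*} [Field F] (k : ℕ) (a : F) : Option F → Option F → Prop
  | some x, some y => fieldTr k ((x * y + x + a) / (x + y)) = 0
  | some x, none   => fieldTr k x = 0
  | none,   some y => fieldTr k y = 0
  | none,   none   => False

/-- The graph `G_k(a)` on the vertex set `F ∪ {∞}`.  (When `tr(1) = 0`, the
relation `adjRel` is symmetric on distinct vertices, so `fromRel` produces
exactly the graph whose adjacency is given by `adjRel`.) -/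
def Gka {F : Type*} [Field F] (k : ℕ) (a : F) : SimpleGraph (Option F) :=
  SimpleGraph.fromRel (adjRel k a)

/-! For `tr t = 0` the translation `x ↦ x + t` is an isomorphism `G_k(a) ≅ G_k(a + t² + t)`,
and the Frobenius `x ↦ x²` is an isomorphism `G_k(a) ≅ G_k(a²)`. If `tr a = tr a' = 1` then
`tr (a + a') = 0`, so by additive Hilbert 90 `a' = a + t² + t` for some `t`. If `tr t = 1`,
write instead `a' = a² + s² + s` with `s = a + t`, which has trace `0`. -/

open Finset

section

variable {F : Type*} [Field F]

section Trace

theorem fieldTr_add [CharP F 2] (k : ℕ) (x y : F) :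
    fieldTr k (x + y) = fieldTr k x + fieldTr k y := by
  simp only [fieldTr, ← sum_add_distrib, add_pow_char_pow]

theorem fieldTr_sq [Fintype F] {k : ℕ} (hcard : Fintype.card F = 2 ^ k) (x : F) :
    fieldTr k (x ^ 2) = fieldTr k x := by
  have hx : x ^ 2 ^ k = x := hcard ▸ FiniteField.pow_card x
  have hshift := sum_range_succ_comm (fun i => x ^ 2 ^ i) k
  rw [sum_range_succ', hx, pow_zero, pow_one, add_comm] at hshift
  simp only [fieldTr, ← pow_mul, ← pow_succ']
  exact add_left_cancel hshift

theorem fieldTr_eq_zero_or_one [Fintype F] [CharP F 2] {k : ℕ}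
    (hcard : Fintype.card F = 2 ^ k) (x : F) : fieldTr k x = 0 ∨ fieldTr k x = 1 := by
  have hidem : fieldTr k x ^ 2 = fieldTr k x :=
    calc fieldTr k x ^ 2 = fieldTr k (x ^ 2) := by
          simp only [fieldTr, CharTwo.sum_sq, ← pow_mul, mul_comm]
      _ = fieldTr k x := fieldTr_sq hcard x
  grind

end Trace

section ArtinSchreier

variable (F) [CharP F 2]

def artinSchreier : F →+ F :=
  AddMonoidHom.mk' (fun t => t ^ 2 + t) fun x y => by grind

def traceHom (k : ℕ) : F →+ F :=
  AddMonoidHom.mk' (fieldTr k) (fieldTr_add k)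

variable {F}

theorem card_ker_artinSchreier_le : Nat.card (artinSchreier F).ker ≤ 2 := by
  have hsub : ((artinSchreier F).ker : Set F) ⊆ {0, 1} := by
    intro t ht
    change t ^ 2 + t = 0 at ht
    grind
  rw [← SetLike.coe_sort_coe, Nat.card_coe_set_eq]
  exact (Set.ncard_le_ncard hsub).trans (Set.ncard_pair zero_ne_one).le

theorem range_artinSchreier_le_ker_traceHom [Fintype F] {k : ℕ}
    (hcard : Fintype.card F = 2 ^ k) : (artinSchreier F).range ≤ (traceHom F k).ker := by
  rintro _ ⟨t, rfl⟩
  change fieldTr k (t ^ 2 + t) = 0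
  rw [fieldTr_add, fieldTr_sq hcard, CharTwo.add_self_eq_zero]

/-- Additive Hilbert 90: the range has index at most 2 since `t ↦ t² + t` has kernel `{0, 1}`,
and the kernel of the trace has index at least 2 since the trace does not vanish at `a`. -/
theorem range_artinSchreier_eq_ker_traceHom [Fintype F] {k : ℕ}
    (hcard : Fintype.card F = 2 ^ k) {a : F} (ha : fieldTr k a ≠ 0) :
    (artinSchreier F).range = (traceHom F k).ker := by
  refine AddSubgroup.eq_of_le_of_card_ge (range_artinSchreier_le_ker_traceHom hcard) ?_
  have hT := (traceHom F k).ker.card_mul_index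
  have hP := (artinSchreier F).ker.card_mul_index
  have hidx : 1 < (traceHom F k).ker.index :=
    AddSubgroup.one_lt_index_of_ne_top fun htop =>
      ha (htop ▸ AddSubgroup.mem_top a : a ∈ (traceHom F k).ker)
  rw [AddSubgroup.index_ker] at hP
  nlinarith [card_ker_artinSchreier_le (F := F)]

theorem exists_sq_add_self_eq [Fintype F] {k : ℕ} (hcard : Fintype.card F = 2 ^ k) {a u : F}
    (ha : fieldTr k a ≠ 0) (hu : fieldTr k u = 0) : ∃ t : F, t ^ 2 + t = u := by
  have hu' : u ∈ (traceHom F k).ker := hu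
  rw [← range_artinSchreier_eq_ker_traceHom hcard ha] at hu'
  exact hu'

end ArtinSchreier

def SimpleGraph.fromRelIso {V W : Type*} {r : V → V → Prop} {s : W → W → Prop} (e : V ≃ W)
    (h : ∀ u v, u ≠ v → (s (e u) (e v) ↔ r u v)) :
    SimpleGraph.fromRel r ≃g SimpleGraph.fromRel s where
  toEquiv := e
  map_rel_iff' {u v} := by
    by_cases huv : u = v
    · simp [huv]
    · simp [huv, h u v huv, h v u (Ne.symm huv)]

namespace Gka

variable (k : ℕ) {a a' : F}

def isoOfEquiv (e : F ≃ F) (hinf : ∀ x, fieldTr k (e x) = fieldTr k x)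
    (hfin : ∀ x y, x ≠ y → (adjRel k a' (e x) (e y) ↔ adjRel k a x y)) :
    Gka k a ≃g Gka k a' :=
  SimpleGraph.fromRelIso e.optionCongr <| by
    rintro (_ | x) (_ | y) hxy
    · exact absurd rfl hxy
    all_goals simp_all [adjRel]

def isoOfRingEquiv (σ : F ≃+* F) (hσ : ∀ x, fieldTr k (σ x) = fieldTr k x) :
    Gka k a ≃g Gka k (σ a) :=
  isoOfEquiv k σ.toEquiv hσ fun x y _ => by
    simp only [adjRel, ← hσ ((x * y + x + a) / (x + y)), map_div₀, map_add, map_mul]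
    rfl

def isoAddRight [CharP F 2] (a : F) {t : F} (ht : fieldTr k t = 0) :
    Gka k a ≃g Gka k (a + (t ^ 2 + t)) :=
  isoOfEquiv k (Equiv.addRight t) (by simp [fieldTr_add, ht]) fun x y hxy => by
    have hxy : x + y ≠ 0 := by grind
    have harg : ((x + t) * (y + t) + (x + t) + (a + (t ^ 2 + t))) / ((x + t) + (y + t)) =
        (x * y + x + a) / (x + y) + t := by
      rw [div_add' _ _ _ hxy]
      congr 1 <;> grind
    simp only [adjRel, Equiv.coe_addRight, harg, fieldTr_add, ht, add_zero]

end Gka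

end

theorem Gka_iso_of_trace_one_general
    {F : Type*} [Field F] [Fintype F] [CharP F 2] (k : ℕ)
    (hcard : Fintype.card F = 2 ^ k) (a a' : F)
    (ha : fieldTr k a = 1) (ha' : fieldTr k a' = 1) :
    Nonempty (Gka k a ≃g Gka k a') := by
  obtain ⟨t, ht⟩ := exists_sq_add_self_eq hcard (ha ▸ one_ne_zero) (u := a + a')
    (by rw [fieldTr_add, ha, ha', CharTwo.add_self_eq_zero])
  rcases fieldTr_eq_zero_or_one hcard t with ht0 | ht1
  · obtain rfl : a' = a + (t ^ 2 + t) := by grind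
    exact ⟨Gka.isoAddRight k a ht0⟩
  · have hs : fieldTr k (a + t) = 0 := by rw [fieldTr_add, ha, ht1, CharTwo.add_self_eq_zero]
    obtain rfl : a' = frobeniusEquiv F 2 a + ((a + t) ^ 2 + (a + t)) := by
      rw [frobeniusEquiv_apply, frobenius_def]
      grind
    exact ⟨(Gka.isoOfRingEquiv k (frobeniusEquiv F 2) fun x => by
      rw [frobeniusEquiv_apply, frobenius_def, fieldTr_sq hcard]).trans (Gka.isoAddRight k _ hs)⟩

theorem Gka_iso_of_trace_one
    {F : Type*} [Field F] [Fintype F] [CharP F 2] (k : ℕ) (hk : Even k)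
    (hcard : Fintype.card F = 2 ^ k) (a a' : F)
    (ha : fieldTr k a = 1) (ha' : fieldTr k a' = 1) :
    Nonempty (Gka k a ≃g Gka k a') :=
  Gka_iso_of_trace_one_general k hcard a a' ha ha'
end

section
/- Let F be a finite field of characteristic 2 with |F| = q, and let K be a quadratic extension field of F. Then for every divisor d of q + 1 with d > 2, there exist a ∈ F with tr(a) = 1 and λ ∈ K with λ² + λ + a = 0 such that λ^q/λ has multiplicative order exactly d in K^×. -/
/-!
Choose `μ ∈ K` of order `d`; this is possible since `d ∣ q + 1 ∣ q² - 1 = |Kˣ|`, and `μ ≠ 1` as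
`d > 2`. Put `λ = (μ + 1)⁻¹`. From `μ ^ q = μ⁻¹` one gets `λ ^ q = λ + 1`, hence `λ ^ q / λ = μ`,
and `a = λ² + λ` is fixed by the Frobenius `x ↦ x ^ q`, so it lies in `F`. Its trace telescopes:
`tr(λ² + λ) = λ ^ q + λ = 1`.
-/

open Polynomial

theorem IsCyclic.exists_orderOf_eq_of_dvd {α : Type*} [Group α] [Finite α] [IsCyclic α] {d : ℕ}
    (hd : d ∣ Nat.card α) : ∃ g : α, orderOf g = d := by
  obtain ⟨g, hg⟩ := IsCyclic.exists_ofOrder_eq_natCard (α := α)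
  exact ⟨g ^ (orderOf g / d), orderOf_pow_orderOf_div (hg ▸ Nat.card_pos.ne') (hg ▸ hd)⟩

namespace FiniteField

theorem exists_orderOf_eq_of_dvd {K : Type*} [Field K] [Fintype K] {d : ℕ}
    (hd : d ∣ Fintype.card K - 1) : ∃ μ : K, orderOf μ = d := by
  obtain ⟨u, hu⟩ := IsCyclic.exists_orderOf_eq_of_dvd (α := Kˣ) (d := d)
    (by rwa [Nat.card_units, Nat.card_eq_fintype_card])
  exact ⟨u, orderOf_units.trans hu⟩

theorem mem_range_algebraMap_of_pow_card_eq_self {F K : Type*} [Field F] [Fintype F]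
    [CommRing K] [IsDomain K] [Algebra F K] {x : K} (hx : x ^ Fintype.card F = x) :
    x ∈ (algebraMap F K).range := by
  have hsplit : Splits (X ^ Fintype.card F - X : F[X]) := by
    rw [splits_iff_card_roots, roots_X_pow_card_sub_X,
      X_pow_card_sub_X_natDegree_eq F Fintype.one_lt_card]
    rfl
  exact hsplit.mem_range_of_isRoot (X_pow_card_sub_X_ne_zero F Fintype.one_lt_card)
    (by simp [hx])

end FiniteField

theorem map_fieldTr {F K : Type*} [Field F] [Field K] (f : F →+* K) (k : ℕ) (a : F) :
    f (fieldTr k a) = fieldTr k (f a) := by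
  simp only [fieldTr, map_sum, map_pow]

theorem sq_add_self_pow_two_pow_eq_self {R : Type*} [CommRing R] [CharP R 2] {k : ℕ} {x : R}
    (hx : x ^ 2 ^ k = x + 1) : (x ^ 2 + x) ^ 2 ^ k = x ^ 2 + x := by
  rw [add_pow_char_pow, ← pow_mul, mul_comm, pow_mul, hx]
  linear_combination (x + 1) * CharTwo.two_eq_zero (R := R)

section CharTwo

variable {K : Type*} [Field K] [CharP K 2]

theorem fieldTr_sq_add_self (k : ℕ) (x : K) : fieldTr k (x ^ 2 + x) = x ^ 2 ^ k + x := by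
  induction k with
  | zero => simp [fieldTr, CharTwo.add_self_eq_zero]
  | succ k ih =>
    rw [fieldTr, Finset.sum_range_succ, ← fieldTr, ih, add_pow_char_pow, ← pow_mul, pow_succ,
      mul_comm (2 ^ k) 2]
    linear_combination x ^ 2 ^ k * CharTwo.two_eq_zero (R := K)

theorem inv_add_one_pow_two_pow_eq_add_one {k : ℕ} {μ : K} (hμ : μ ^ (2 ^ k + 1) = 1)
    (hμ1 : μ ≠ 1) : (μ + 1)⁻¹ ^ 2 ^ k = (μ + 1)⁻¹ + 1 := by
  have hμ0 : μ ≠ 0 := by rintro rfl; simp at hμ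
  have hμ_add : μ + 1 ≠ 0 := CharTwo.sub_eq_add μ 1 ▸ sub_ne_zero.mpr hμ1
  have hμq : μ ^ 2 ^ k = μ⁻¹ := eq_inv_of_mul_eq_one_left (by rwa [← pow_succ])
  rw [inv_pow, add_pow_char_pow, one_pow, hμq]
  refine inv_eq_of_mul_eq_one_right ?_
  field_simp
  linear_combination (1 + μ) * CharTwo.two_eq_zero (R := K)

end CharTwo

theorem exists_trace_one_with_order
    {F K : Type*} [Field F] [Fintype F] [CharP F 2] [Field K] [Fintype K]
    [Algebra F K] (k : ℕ) (hcard : Fintype.card F = 2 ^ k)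
    (hK : Fintype.card K = Fintype.card F ^ 2) :
    ∀ d : ℕ, d ∣ Fintype.card F + 1 → 2 < d →
      ∃ a : F, fieldTr k a = 1 ∧
        ∃ lam : K, lam ^ 2 + lam + algebraMap F K a = 0 ∧
          orderOf (lam ^ Fintype.card F / lam) = d := by
  intro d hdvd hd2
  have : CharP K 2 := charP_of_injective_algebraMap (algebraMap F K).injective 2
  obtain ⟨μ, hμ⟩ := FiniteField.exists_orderOf_eq_of_dvd (K := K) (d := d) <| by
    rw [hK, ← one_pow 2, Nat.sq_sub_sq]
    exact hdvd.mul_right _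
  have hμ1 : μ ≠ 1 := by rintro rfl; rw [orderOf_one] at hμ; omega
  have hμ_add : μ + 1 ≠ 0 := CharTwo.sub_eq_add μ 1 ▸ sub_ne_zero.mpr hμ1
  have hμq : μ ^ (2 ^ k + 1) = 1 := orderOf_dvd_iff_pow_eq_one.mp (hμ ▸ hcard ▸ hdvd)
  set lam := (μ + 1)⁻¹ with hlam_def
  have hlam : lam ^ 2 ^ k = lam + 1 := inv_add_one_pow_two_pow_eq_add_one hμq hμ1
  obtain ⟨a, ha⟩ := FiniteField.mem_range_algebraMap_of_pow_card_eq_self (F := F)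
    (by rw [hcard]; exact sq_add_self_pow_two_pow_eq_self hlam)
  refine ⟨a, (algebraMap F K).injective ?_, lam, ?_, ?_⟩
  · rw [map_fieldTr, ha, map_one, fieldTr_sq_add_self, hlam]
    linear_combination lam * CharTwo.two_eq_zero (R := K)
  · rw [ha, CharTwo.add_self_eq_zero]
  · have hquot : lam ^ 2 ^ k / lam = μ := by
      rw [hlam, add_div, div_self (inv_ne_zero hμ_add), one_div, hlam_def, inv_inv]
      linear_combination CharTwo.two_eq_zero (R := K)
    rw [hcard, hquot, hμ]
end
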